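/- Let q = 2^r with r a positive integer and let a ∈ 𝔽_q^*. Then the number of elements g ∈ SO⁺(2,q) with tr(a·Tr g) = 1 equals (q − 1 − K(λ;a))/2, and the number of elements g ∈ O⁺(2,q) with tr(a·Tr g) = 1 also equals (q − 1 − K(λ;a))/2 (where Tr g is the matrix trace). -/

import Mathlib

open Finset Matrix

/-- The quadratic form `θ⁺(x) = ∑ i, x_i x_{n+i}` on `F^{2n}` (columns indexed by `Fin n ⊕ Fin n`). -/
def thetaPlus (F : Type) [Field F] (n : ℕ) (x : Fin n ⊕ Fin n → F) : F :=
  ∑ i : Fin n, x (Sum.inl i) * x (Sum.inr i)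

/-- The orthogonal group `O⁺(2n,q)`: invertible matrices preserving `θ⁺`. -/
noncomputable def OplusGrp (F : Type) [Field F] [Fintype F] [DecidableEq F] (n : ℕ) :
    Finset (Matrix (Fin n ⊕ Fin n) (Fin n ⊕ Fin n) F) := by
  classical
  exact Finset.univ.filter (fun w => IsUnit w ∧
    ∀ x : Fin n ⊕ Fin n → F, thetaPlus F n (w.mulVec x) = thetaPlus F n x)

/-- `SO⁺(2n,q)`: the kernel of `δ⁺(w) = Tr(B ᵗC)` on `O⁺(2n,q)`,
where `w = [[A,B],[C,D]]` in `n × n` blocks. -/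
noncomputable def SOplusGrp (F : Type) [Field F] [Fintype F] [DecidableEq F] (n : ℕ) :
    Finset (Matrix (Fin n ⊕ Fin n) (Fin n ⊕ Fin n) F) := by
  classical
  exact (OplusGrp F n).filter
    (fun w => Matrix.trace (Matrix.toBlocks₁₂ w * (Matrix.toBlocks₂₁ w)ᵀ) = 0)

/-- The trace map `tr(x) = x + x² + ⋯ + x^{2^{r−1}}`, valued in `𝔽₂ = {0,1} ⊆ F`. -/
def trF (F : Type) [Field F] (r : ℕ) (x : F) : F := ∑ i ∈ Finset.range r, x ^ 2 ^ i

/-- The canonical additive character `λ(x) = (−1)^{tr(x)} ∈ {±1} ⊆ ℤ`. -/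
noncomputable def lam (F : Type) [Field F] (r : ℕ) (x : F) : ℤ := by
  classical exact if trF F r x = 0 then 1 else -1

/-- The trace map `tr` viewed as a function into `𝔽₂ = ZMod 2`. -/
noncomputable def tr2 (F : Type) [Field F] (r : ℕ) (x : F) : ZMod 2 := by
  classical exact if trF F r x = 0 then 0 else 1

/-- The Kloosterman sum `K(λ;a) = ∑_{α ∈ F*} λ(α + aα⁻¹)`. -/
noncomputable def Kl (F : Type) [Field F] [Fintype F] (r : ℕ) (a : F) : ℤ := by
  classical
  exact ∑ α ∈ Finset.univ.filter (fun α : F => α ≠ 0), lam F r (α + a * α⁻¹)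

/-- The `m`-dimensional Kloosterman sum
`K_m(λ;a) = ∑_{α₁,…,α_m ∈ F*} λ(α₁ + ⋯ + α_m + aα₁⁻¹⋯α_m⁻¹)`;
for `m = 0` this is `K₀(λ;a) = λ(a)`. -/
noncomputable def Klm (F : Type) [Field F] [Fintype F] (r m : ℕ) (a : F) : ℤ := by
  classical
  exact ∑ v ∈ Finset.univ.filter (fun v : Fin m → F => ∀ i, v i ≠ 0),
    lam F r ((∑ i, v i) + a * (∏ i, v i)⁻¹)

/-- The power moment `MK^h = ∑_{a ∈ F*} K(λ;a)^h`. -/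
noncomputable def MK (F : Type) [Field F] [Fintype F] (r h : ℕ) : ℤ := by
  classical exact ∑ a ∈ Finset.univ.filter (fun a : F => a ≠ 0), (Kl F r a) ^ h

/-- The power moment `MK₂^h = ∑_{a ∈ F*} K₂(λ;a)^h` of 2-dimensional Kloosterman sums. -/
noncomputable def MK2 (F : Type) [Field F] [Fintype F] (r h : ℕ) : ℤ := by
  classical exact ∑ a ∈ Finset.univ.filter (fun a : F => a ≠ 0), (Klm F r 2 a) ^ h

/-- The binary code `C(G) = {u ∈ 𝔽₂^G : ∑_{g ∈ G} u_g Tr(g) = 0 in F}`. -/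
noncomputable def code (F : Type) [Field F] [Fintype F] [DecidableEq F]
    {ι : Type} [Fintype ι] [DecidableEq ι] (G : Finset (Matrix ι ι F)) :
    Finset (↥G → ZMod 2) := by
  classical
  exact Finset.univ.filter
    (fun u => ∑ g : ↥G, (u g).val • Matrix.trace (g : Matrix ι ι F) = 0)

/-- Number of codewords of Hamming weight `j` in the code `C(G)`. -/
noncomputable def wtCount (F : Type) [Field F] [Fintype F] [DecidableEq F]
    {ι : Type} [Fintype ι] [DecidableEq ι] (G : Finset (Matrix ι ι F)) (j : ℕ) : ℕ := by
  classical
  exact ((code F G).filter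
    (fun u => (Finset.univ.filter (fun g : ↥G => u g = 1)).card = j)).card

/-- `t! · S(h,t)` where `S(h,t)` is the Stirling number of the second kind,
`S(h,t) = (1/t!) ∑_{j=0}^{t} (−1)^{t−j} C(t,j) j^h`. -/
def tS (h t : ℕ) : ℤ :=
  ∑ j ∈ Finset.range (t + 1), (-1 : ℤ) ^ (t - j) * (t.choose j : ℤ) * (j : ℤ) ^ h

/-- Binomial coefficient with integer arguments: `0` whenever `k < 0` or `k > n`. -/
def ichoose (n k : ℤ) : ℤ := if 0 ≤ k ∧ k ≤ n then (n.toNat.choose k.toNat : ℤ) else 0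

/-!
Write `q = 2 ^ r`. An isometry of the hyperbolic plane `θ⁺(x, y) = x y` is either
`diag(α, α⁻¹)`, which lies in `SO⁺(2, q)` and has trace `α + α⁻¹`, or `antidiag(β, β⁻¹)`,
which has trace `0`. Since `tr 0 = 0`, both counts equal `N = #{α ∈ 𝔽_q | tr(a(α + α⁻¹)) = 1}`.
Writing `λ = 1 - 2·[tr = 1]`, we get `∑_α λ(a(α + α⁻¹)) = q - 2N`, and the substitutions
`α ↦ α²` (a bijection in characteristic `2`, under which `λ` is invariant) and `α ↦ a α`
turn this sum into `∑_α λ(α + a α⁻¹) = K(λ; a) + 1`, the term `α = 0` contributing `λ(0) = 1`.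
-/

section AbsoluteTrace

variable {F : Type} [Field F] {r : ℕ}

@[simp]
theorem trF_zero : trF F r 0 = 0 :=
  Finset.sum_eq_zero fun _ _ => zero_pow (pow_ne_zero _ two_ne_zero)

theorem trF_sq [Fintype F] (hF : Fintype.card F = 2 ^ r) (x : F) :
    trF F r (x ^ 2) = trF F r x := by
  have hfrob : ∀ i, (x ^ 2) ^ 2 ^ i = x ^ 2 ^ (i + 1) := fun i => by
    rw [← pow_mul, pow_succ', mul_comm]
  have hx : x ^ 2 ^ r = x := hF ▸ FiniteField.pow_card x
  have hshift := Finset.sum_range_succ' (fun i => x ^ 2 ^ i) r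
  rw [Finset.sum_range_succ, hx, pow_zero, pow_one] at hshift
  simpa only [trF, hfrob] using (add_right_cancel hshift).symm

theorem trF_eq_zero_or_one [Fintype F] [CharP F 2] (hF : Fintype.card F = 2 ^ r) (x : F) :
    trF F r x = 0 ∨ trF F r x = 1 := by
  have hidem : trF F r x ^ 2 = trF F r x := by
    calc trF F r x ^ 2 = trF F r (x ^ 2) := by
          rw [trF, trF, sum_pow_char]
          exact Finset.sum_congr rfl fun i _ => by rw [← pow_mul, ← pow_mul, mul_comm]
      _ = trF F r x := trF_sq hF x
  have : trF F r x * (trF F r x - 1) = 0 := by linear_combination hidem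
  exact (mul_eq_zero.mp this).imp id sub_eq_zero.mp

theorem lam_eq_one_sub_two_mul [Fintype F] [DecidableEq F] [CharP F 2]
    (hF : Fintype.card F = 2 ^ r) (x : F) :
    lam F r x = 1 - 2 * if trF F r x = 1 then 1 else 0 := by
  rcases trF_eq_zero_or_one hF x with h | h <;> simp [lam, h]

theorem lam_sq [Fintype F] (hF : Fintype.card F = 2 ^ r) (x : F) :
    lam F r (x ^ 2) = lam F r x := by
  rw [lam, lam, trF_sq hF]

theorem sum_lam [Fintype F] [DecidableEq F] [CharP F 2] (hF : Fintype.card F = 2 ^ r)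
    (f : F → F) :
    ∑ α, lam F r (f α) = 2 ^ r - 2 * #{α | trF F r (f α) = 1} := by
  simp only [lam_eq_one_sub_two_mul hF, Finset.sum_sub_distrib, ← Finset.mul_sum,
    Finset.sum_boole, Finset.sum_const, Finset.card_univ, hF]
  simp

theorem Kl_add_one [Fintype F] [DecidableEq F] (a : F) :
    Kl F r a + 1 = ∑ α, lam F r (α + a * α⁻¹) := by
  have hzero : lam F r (0 + a * 0⁻¹) = 1 := by simp [lam]
  rw [← Finset.add_sum_erase _ _ (Finset.mem_univ 0), hzero, add_comm, Kl,
    ← Finset.filter_ne']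
  congr 2
  ext
  simp

theorem sum_lam_mul_add_inv [Fintype F] [CharP F 2] (hF : Fintype.card F = 2 ^ r)
    {a : F} (ha : a ≠ 0) :
    ∑ α, lam F r (a * (α + α⁻¹)) = ∑ α, lam F r (α + a * α⁻¹) := by
  have hsq : Function.Bijective (fun α : F => α ^ 2) :=
    (frobenius_inj F 2).bijective_of_finite
  calc ∑ α, lam F r (a * (α + α⁻¹))
      = ∑ α, lam F r (a * α + a ^ 2 * (a * α)⁻¹) := by
        refine Finset.sum_congr rfl fun α _ => ?_
        rw [mul_inv, ← mul_assoc, sq, mul_assoc a a, mul_inv_cancel₀ ha, mul_one, mul_add]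
    _ = ∑ β, lam F r (β + a ^ 2 * β⁻¹) :=
        Equiv.sum_comp (Equiv.mulLeft₀ a ha) fun β => lam F r (β + a ^ 2 * β⁻¹)
    _ = ∑ α, lam F r (α ^ 2 + a ^ 2 * (α ^ 2)⁻¹) :=
        (hsq.sum_comp fun β => lam F r (β + a ^ 2 * β⁻¹)).symm
    _ = ∑ α, lam F r (α + a * α⁻¹) := by
        refine Finset.sum_congr rfl fun α _ => ?_
        rw [← lam_sq hF (α + a * α⁻¹), add_pow_char, mul_pow, inv_pow]

theorem card_filter_trF_mul_add_inv [Fintype F] [DecidableEq F] (hF : Fintype.card F = 2 ^ r)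
    {a : F} (ha : a ≠ 0) :
    (#{α | trF F r (a * (α + α⁻¹)) = 1} : ℚ) = ((2 ^ r : ℚ) - 1 - (Kl F r a : ℚ)) / 2 := by
  have : CharP F 2 := charP_of_card_eq_prime_pow hF
  have hsum := sum_lam (r := r) hF fun α => a * (α + α⁻¹)
  rw [sum_lam_mul_add_inv hF ha, ← Kl_add_one] at hsum
  have hsumQ : ((Kl F r a + 1 : ℤ) : ℚ) = 2 ^ r - 2 * #{α | trF F r (a * (α + α⁻¹)) = 1} := by
    exact_mod_cast hsum
  push_cast at hsumQ
  linarith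

end AbsoluteTrace

section OplusTwo

theorem Matrix.ext_sum_fin_one {R : Type*} {w w' : Matrix (Fin 1 ⊕ Fin 1) (Fin 1 ⊕ Fin 1) R}
    (h₁₁ : w (.inl 0) (.inl 0) = w' (.inl 0) (.inl 0))
    (h₁₂ : w (.inl 0) (.inr 0) = w' (.inl 0) (.inr 0))
    (h₂₁ : w (.inr 0) (.inl 0) = w' (.inr 0) (.inl 0))
    (h₂₂ : w (.inr 0) (.inr 0) = w' (.inr 0) (.inr 0)) : w = w' := by
  ext (i | i) (j | j) <;> fin_cases i <;> fin_cases j <;> assumption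

variable {F : Type} [Field F]

def diagOplus (α : F) : Matrix (Fin 1 ⊕ Fin 1) (Fin 1 ⊕ Fin 1) F :=
  fromBlocks !![α] 0 0 !![α⁻¹]

def antidiagOplus (β : F) : Matrix (Fin 1 ⊕ Fin 1) (Fin 1 ⊕ Fin 1) F :=
  fromBlocks 0 !![β] !![β⁻¹] 0

theorem thetaPlus_one (x : Fin 1 ⊕ Fin 1 → F) :
    thetaPlus F 1 x = x (.inl 0) * x (.inr 0) := by
  simp [thetaPlus]

theorem mulVec_sum_fin_one (w : Matrix (Fin 1 ⊕ Fin 1) (Fin 1 ⊕ Fin 1) F)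
    (x : Fin 1 ⊕ Fin 1 → F) (i : Fin 1 ⊕ Fin 1) :
    (w *ᵥ x) i = w i (.inl 0) * x (.inl 0) + w i (.inr 0) * x (.inr 0) := by
  simp [mulVec, dotProduct, Fintype.sum_sum_type]

@[simp]
theorem trace_diagOplus (α : F) : (diagOplus α).trace = α + α⁻¹ := by
  simp [diagOplus, trace, Fintype.sum_sum_type]

@[simp]
theorem trace_antidiagOplus (β : F) : (antidiagOplus β).trace = 0 := by
  simp [antidiagOplus, trace, Fintype.sum_sum_type]

theorem diagOplus_injective : Function.Injective (diagOplus (F := F)) := fun α β h => by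
  simpa [diagOplus] using congr_fun₂ h (.inl 0) (.inl 0)

variable [Fintype F] [DecidableEq F]

theorem diagOplus_mem_SOplusGrp {α : F} (hα : α ≠ 0) : diagOplus α ∈ SOplusGrp F 1 := by
  have hdet : (diagOplus α).det = 1 := by
    simp [diagOplus, det_fromBlocks_zero₂₁, hα]
  simp only [SOplusGrp, OplusGrp, Finset.mem_filter, Finset.mem_univ, true_and]
  refine ⟨⟨(isUnit_iff_isUnit_det _).mpr (hdet ▸ isUnit_one), fun x => ?_⟩, by simp [diagOplus]⟩
  simp only [thetaPlus_one, mulVec_sum_fin_one]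
  simp [diagOplus]
  field_simp

theorem eq_diagOplus_or_eq_antidiagOplus_of_mem_OplusGrp
    {w : Matrix (Fin 1 ⊕ Fin 1) (Fin 1 ⊕ Fin 1) F} (hw : w ∈ OplusGrp F 1) :
    ∃ α ≠ 0, w = diagOplus α ∨ w = antidiagOplus α := by
  simp only [OplusGrp, Finset.mem_filter, Finset.mem_univ, true_and] at hw
  set A := w (.inl 0) (.inl 0) with hA_def
  set B := w (.inl 0) (.inr 0) with hB_def
  set C := w (.inr 0) (.inl 0) with hC_def
  set D := w (.inr 0) (.inr 0) with hD_def
  have hθ (c d : F) : (A * c + B * d) * (C * c + D * d) = c * d := by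
    simpa [thetaPlus_one, mulVec_sum_fin_one] using hw.2 (Sum.elim (fun _ => c) fun _ => d)
  clear_value A B C D
  have hAC : A * C = 0 := by simpa using hθ 1 0
  have hBD : B * D = 0 := by simpa using hθ 0 1
  have hdet : A * D + B * C = 1 := by linear_combination hθ 1 1 - hAC - hBD
  by_cases hA : A = 0
  · have hBC : B * C = 1 := by simpa [hA] using hdet
    have hB : B ≠ 0 := left_ne_zero_of_mul_eq_one hBC
    have hD : D = 0 := (mul_eq_zero.mp hBD).resolve_left hB
    refine ⟨B, hB, .inr (ext_sum_fin_one ?_ ?_ ?_ ?_)⟩ <;>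
      simp [antidiagOplus, ← hA_def, ← hB_def, ← hC_def, ← hD_def, hA, hD,
        eq_inv_of_mul_eq_one_right hBC]
  · have hC : C = 0 := (mul_eq_zero.mp hAC).resolve_left hA
    have hAD : A * D = 1 := by simpa [hC] using hdet
    have hB : B = 0 := (mul_eq_zero.mp hBD).resolve_right (right_ne_zero_of_mul_eq_one hAD)
    refine ⟨A, hA, .inl (ext_sum_fin_one ?_ ?_ ?_ ?_)⟩ <;>
      simp [diagOplus, ← hA_def, ← hB_def, ← hC_def, ← hD_def, hB, hC,
        eq_inv_of_mul_eq_one_right hAD]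

theorem filter_OplusGrp_trace_eq_image {P : F → Prop} [DecidablePred P] (hP : ¬ P 0) :
    (OplusGrp F 1).filter (fun g => P g.trace) =
      (univ.filter fun α => P (α + α⁻¹)).image diagOplus := by
  ext w
  simp only [Finset.mem_filter, Finset.mem_image, Finset.mem_univ, true_and]
  constructor
  · rintro ⟨hw, hPw⟩
    obtain ⟨α, -, rfl | rfl⟩ := eq_diagOplus_or_eq_antidiagOplus_of_mem_OplusGrp hw
    · exact ⟨α, by simpa using hPw, rfl⟩
    · exact absurd (by simpa using hPw) hP
  · rintro ⟨α, hPα, rfl⟩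
    have hα : α ≠ 0 := by rintro rfl; simp [hP] at hPα
    exact ⟨Finset.mem_of_mem_filter _ (diagOplus_mem_SOplusGrp hα), by simpa using hPα⟩

theorem filter_SOplusGrp_trace_eq_filter_OplusGrp {P : F → Prop} [DecidablePred P]
    (hP : ¬ P 0) :
    (SOplusGrp F 1).filter (fun g => P g.trace) =
      (OplusGrp F 1).filter (fun g => P g.trace) := by
  refine subset_antisymm (Finset.filter_subset_filter _ (Finset.filter_subset _ _)) ?_
  rw [filter_OplusGrp_trace_eq_image hP]
  intro w hw
  obtain ⟨α, hPα, rfl⟩ := Finset.mem_image.mp hw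
  have hα : α ≠ 0 := by rintro rfl; simp [hP] at hPα
  exact Finset.mem_filter.mpr ⟨diagOplus_mem_SOplusGrp hα, by simpa using hPα⟩

end OplusTwo

theorem stmt17_general (r : ℕ) (F : Type) [Field F] [Fintype F] [DecidableEq F]
    (hF : Fintype.card F = 2 ^ r) (a : F) (ha : a ≠ 0) :
    ((((SOplusGrp F 1).filter (fun g => trF F r (a * Matrix.trace g) = 1)).card : ℚ) =
      ((2 ^ r : ℚ) - 1 - (Kl F r a : ℚ)) / 2) ∧
    ((((OplusGrp F 1).filter (fun g => trF F r (a * Matrix.trace g) = 1)).card : ℚ) =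
      ((2 ^ r : ℚ) - 1 - (Kl F r a : ℚ)) / 2) := by
  let P (x : F) : Prop := trF F r (a * x) = 1
  have hP : ¬ P 0 := by simp [P]
  have hO : ((OplusGrp F 1).filter (fun g => P g.trace)).card = #{α | P (α + α⁻¹)} := by
    rw [filter_OplusGrp_trace_eq_image hP, Finset.card_image_of_injective _ diagOplus_injective]
  rw [filter_SOplusGrp_trace_eq_filter_OplusGrp (P := P) hP, hO,
    card_filter_trF_mul_add_inv hF ha]
  exact ⟨rfl, rfl⟩

theorem stmt17 (r : ℕ) (hr : 1 ≤ r) (F : Type) [Field F] [Fintype F] [DecidableEq F]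
    (hF : Fintype.card F = 2 ^ r) (a : F) (ha : a ≠ 0) :
    ((((SOplusGrp F 1).filter (fun g => trF F r (a * Matrix.trace g) = 1)).card : ℚ) =
      ((2 ^ r : ℚ) - 1 - (Kl F r a : ℚ)) / 2) ∧
    ((((OplusGrp F 1).filter (fun g => trF F r (a * Matrix.trace g) = 1)).card : ℚ) =
      ((2 ^ r : ℚ) - 1 - (Kl F r a : ℚ)) / 2) :=
  stmt17_general r F hF a ha
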